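/- arXiv:1405.1868 — 4 statements merged into one kernel-verified Lean document; each statement's English description precedes it below -/
import Mathlib

section
/- Consider the structural equation model X := ε_X, W := h(X, ε_W), Y := f(W, ε_Y), where ε_X, ε_W, ε_Y are independent random elements on a probability space (Ω, F, P) with values in ℝ, ℝ^m, ℝ^l respectively, and h : ℝ × ℝ^m → ℝ and f : ℝ × ℝ^l → ℝ are measurable with f bounded. Define the interventional expectation E[Y | do(X = x)] := E[f(h(x, ε_W), ε_Y)]. Then the function g(x) := E[f(h(x, ε_W), ε_Y)] is measurable and g(X) is a version of the conditional expectation E[Y | σ(X)]; i.e., for this model (which has a directed path X → W → Y and no backdoor paths from X to Y), the interventional expectation equals the observational conditional expectation: E[Y | do(X = x)] = E[Y | X = x]. -/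
/-!
Writing `Y = Φ(X, Z)` with `Z = (ε_W, ε_Y)` and `Φ(x, (w, y)) = f(h(x, w), y)`, the
independence assumptions say that `X` is independent of the whole noise vector `Z`. Hence the
conditional law of `Z` given `X` is the unconditional law of `Z`, and conditioning `Φ(X, Z)` on
`X` amounts to freezing `X` and integrating out `Z`, which is exactly the interventional
expectation `x ↦ E[Φ(x, Z)]` evaluated at `X`.
-/

open MeasureTheory ProbabilityTheory

namespace ProbabilityTheory

variable {Ω α β γ F : Type*} [MeasurableSpace Ω] [mα : MeasurableSpace α] [MeasurableSpace β]
  [MeasurableSpace γ] [NormedAddCommGroup F] [NormedSpace ℝ F]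
  {μ : Measure Ω} {X : Ω → α} {Y : Ω → β} {Z : Ω → γ}

lemma IndepFun.prodMk_right_of_prodMk_left [IsFiniteMeasure μ] (hX : Measurable X)
    (hY : Measurable Y) (hZ : Measurable Z) (hXY : IndepFun X Y μ)
    (hXY_Z : IndepFun (fun ω ↦ (X ω, Y ω)) Z μ) : IndepFun X (fun ω ↦ (Y ω, Z ω)) μ := by
  have hYZ_law : μ.map (fun ω ↦ (Y ω, Z ω)) = (μ.map Y).prod (μ.map Z) :=
    (indepFun_iff_map_prod_eq_prod_map_map hY.aemeasurable hZ.aemeasurable).mp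
      (hXY_Z.comp measurable_snd measurable_id)
  rw [indepFun_iff_map_prod_eq_prod_map_map hX.aemeasurable (hY.prodMk hZ).aemeasurable,
    hYZ_law, ← Measure.prodAssoc_prod,
    ← (indepFun_iff_map_prod_eq_prod_map_map hX.aemeasurable hY.aemeasurable).mp hXY,
    ← (indepFun_iff_map_prod_eq_prod_map_map (hX.prodMk hY).aemeasurable hZ.aemeasurable).mp
      hXY_Z,
    Measure.map_map MeasurableEquiv.prodAssoc.measurable ((hX.prodMk hY).prodMk hZ)]
  rfl

lemma condDistrib_ae_eq_const_of_indepFun [IsFiniteMeasure μ] [StandardBorelSpace β]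
    [Nonempty β] (hX : Measurable X) (hY : Measurable Y) (hXY : IndepFun X Y μ) :
    condDistrib Y X μ =ᵐ[μ.map X] Kernel.const α (μ.map Y) := by
  rw [condDistrib_ae_eq_iff_measure_eq_compProd X hY.aemeasurable, Measure.compProd_const]
  exact (indepFun_iff_map_prod_eq_prod_map_map hX.aemeasurable hY.aemeasurable).mp hXY

lemma condExp_comp_prodMk_ae_eq_integral_of_indepFun [CompleteSpace F] [IsFiniteMeasure μ]
    [StandardBorelSpace β] [Nonempty β] (hX : Measurable X) (hY : Measurable Y)
    (hXY : IndepFun X Y μ) {φ : α × β → F} (hφ : StronglyMeasurable φ)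
    (hφ_int : Integrable (fun ω ↦ φ (X ω, Y ω)) μ) :
    μ[fun ω ↦ φ (X ω, Y ω) | mα.comap X] =ᵐ[μ] fun ω ↦ ∫ ω', φ (X ω, Y ω') ∂μ := by
  filter_upwards [condExp_prod_ae_eq_integral_condDistrib hX hY.aemeasurable hφ hφ_int,
    ae_of_ae_map hX.aemeasurable (condDistrib_ae_eq_const_of_indepFun hX hY hXY)] with ω hω hκ
  rw [hω, hκ, Kernel.const_apply]
  exact integral_map hY.aemeasurable
    (hφ.comp_measurable measurable_prodMk_left).aestronglyMeasurable

lemma stronglyMeasurable_integral_comp_prodMk [SFinite μ] (hY : Measurable Y)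
    {φ : α × β → F} (hφ : StronglyMeasurable φ) :
    StronglyMeasurable fun x ↦ ∫ ω, φ (x, Y ω) ∂μ := by
  convert hφ.integral_prod_right' (ν := μ.map Y) using 2 with x
  exact (integral_map hY.aemeasurable
    (hφ.comp_measurable measurable_prodMk_left).aestronglyMeasurable).symm

end ProbabilityTheory

/-- **No backdoor paths: interventional = observational conditional expectation.**
In the SEM `X := ε_X`, `W := h(X, ε_W)`, `Y := f(W, ε_Y)` with jointly independent
noises (encoded as `ε_X ⟂ ε_W` and `(ε_X, ε_W) ⟂ ε_Y`), `h, f` measurable and `f`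
bounded, the function `g(x) := E[f(h(x, ε_W), ε_Y)] = E[Y | do(X = x)]` is measurable
and `g(X)` is a version of `E[Y | σ(X)]`; i.e. the interventional expectation equals
the observational conditional expectation. -/
theorem interventional_eq_observational_no_backdoor
    {Ω : Type*} [MeasurableSpace Ω] (P : Measure Ω) [IsProbabilityMeasure P]
    {m l : ℕ} (εX : Ω → ℝ) (εW : Ω → (Fin m → ℝ)) (εY : Ω → (Fin l → ℝ))
    (hεX : Measurable εX) (hεW : Measurable εW) (hεY : Measurable εY)
    (hindep1 : IndepFun εX εW P)
    (hindep2 : IndepFun (fun ω => (εX ω, εW ω)) εY P)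
    (h : ℝ → (Fin m → ℝ) → ℝ) (hh : Measurable (Function.uncurry h))
    (f : ℝ → (Fin l → ℝ) → ℝ) (hf : Measurable (Function.uncurry f))
    (B : ℝ) (hfB : ∀ w e, |f w e| ≤ B)
    (X : Ω → ℝ) (W : Ω → ℝ) (Y : Ω → ℝ)
    (hX : X = εX)
    (hWdef : ∀ ω, W ω = h (X ω) (εW ω))
    (hYdef : ∀ ω, Y ω = f (W ω) (εY ω)) :
    Measurable (fun x => ∫ ω, f (h x (εW ω)) (εY ω) ∂P) ∧
    P[Y | MeasurableSpace.comap X inferInstance]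
      =ᵐ[P] fun ω => ∫ ω', f (h (X ω) (εW ω')) (εY ω') ∂P := by
  subst hX
  set Φ : ℝ × ((Fin m → ℝ) × (Fin l → ℝ)) → ℝ := fun q ↦ f (h q.1 q.2.1) q.2.2
  have hΦ : Measurable Φ :=
    hf.comp ((hh.comp (measurable_fst.prodMk measurable_snd.fst)).prodMk measurable_snd.snd)
  have hεWY : Measurable fun ω ↦ (εW ω, εY ω) := hεW.prodMk hεY
  have hY : Y = fun ω ↦ Φ (X ω, (εW ω, εY ω)) := funext fun ω ↦ by rw [hYdef, hWdef]
  have hY_int : Integrable Y P := by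
    refine .of_bound (hY ▸ (hΦ.comp (hεX.prodMk hεWY)).aestronglyMeasurable) B
      (.of_forall fun ω ↦ ?_)
    rw [hYdef, Real.norm_eq_abs]
    exact hfB _ _
  have hX_indep_noise : IndepFun X (fun ω ↦ (εW ω, εY ω)) P :=
    hindep1.prodMk_right_of_prodMk_left hεX hεW hεY hindep2
  refine ⟨(stronglyMeasurable_integral_comp_prodMk hεWY hΦ.stronglyMeasurable).measurable, ?_⟩
  subst hY
  exact condExp_comp_prodMk_ae_eq_integral_of_indepFun hεX hεWY hX_indep_noise
    hΦ.stronglyMeasurable hY_int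
end

section
/- Consider the structural equation model Z := ε_Z, X := h(Z, ε_X), Y := f(X, Z, ε_Y), where ε_Z, ε_X, ε_Y are independent random elements on a probability space (Ω, F, P) with values in ℝ^k, ℝ^m, ℝ^l respectively, and h : ℝ^k × ℝ^m → ℝ and f : ℝ × ℝ^k × ℝ^l → ℝ are measurable with f bounded. Define the interventional expectation E[Y | do(X = x)] := E[f(x, Z, ε_Y)] and the regression function m(u, z) := E[f(u, z, ε_Y)]. Then: (i) m is measurable and m(X, Z) is a version of the conditional expectation E[Y | σ(X, Z)]; and (ii) the backdoor adjustment formula with the parental adjustment set S = {Z} holds: E[Y | do(X = x)] = ∫ m(x, z) dP_Z(z), where P_Z is the law of Z. -/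
/-!
The structural equations make `(X, Z)` a measurable function of `(ε_Z, ε_X)`, hence independent
of `ε_Y`, so the joint law of `((X, Z), ε_Y)` is the product of the marginals. Fubini on this
product identifies the integral of `Y = f(X, Z, ε_Y)` over any event `{(X, Z) ∈ t}` with that of
`m(X, Z)`, which characterises `E[Y | σ(X, Z)]`; the same computation for `Z ⟂ ε_Y`, with the
first argument of `f` frozen at `x`, is the adjustment formula.
-/

open MeasureTheory ProbabilityTheory

section

variable {Ω α β G : Type*} [MeasurableSpace Ω] [MeasurableSpace α] [MeasurableSpace β]
  [NormedAddCommGroup G] {P : Measure Ω} {W : Ω → α} {E : Ω → β} {F : α × β → G}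

lemma ProbabilityTheory.IndepFun.integrable_prod_map_map [IsFiniteMeasure P]
    (hWE : IndepFun W E P) (hW : Measurable W) (hE : Measurable E)
    (hF : StronglyMeasurable F) (hint : Integrable (fun ω => F (W ω, E ω)) P) :
    Integrable F ((P.map W).prod (P.map E)) := by
  rwa [← hWE.map_prod_eq_prod_map_map hW.aemeasurable hE.aemeasurable,
    integrable_map_measure hF.aestronglyMeasurable (hW.prodMk hE).aemeasurable]

variable [NormedSpace ℝ G]

lemma MeasureTheory.integral_comp_prodMk_left_eq_integral_map (hE : Measurable E)
    (hF : StronglyMeasurable F) (w : α) :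
    ∫ ω, F (w, E ω) ∂P = ∫ e, F (w, e) ∂(P.map E) :=
  (integral_map hE.aemeasurable
    (hF.comp_measurable measurable_prodMk_left).aestronglyMeasurable).symm

namespace ProbabilityTheory.IndepFun

variable [IsFiniteMeasure P]

lemma integrable_integral_comp_prodMk_left (hWE : IndepFun W E P) (hW : Measurable W)
    (hE : Measurable E) (hF : StronglyMeasurable F)
    (hint : Integrable (fun ω => F (W ω, E ω)) P) :
    Integrable (fun w => ∫ ω', F (w, E ω') ∂P) (P.map W) := by
  simpa only [integral_comp_prodMk_left_eq_integral_map hE hF] using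
    (hWE.integrable_prod_map_map hW hE hF hint).integral_prod_left

lemma setIntegral_preimage_comp_eq_setIntegral_integral (hWE : IndepFun W E P)
    (hW : Measurable W) (hE : Measurable E) (hF : StronglyMeasurable F)
    (hint : Integrable (fun ω => F (W ω, E ω)) P) {t : Set α} (ht : MeasurableSet t) :
    ∫ ω in W ⁻¹' t, F (W ω, E ω) ∂P = ∫ w in t, ∫ ω', F (w, E ω') ∂P ∂(P.map W) := by
  calc ∫ ω in W ⁻¹' t, F (W ω, E ω) ∂P
      = ∫ q in t ×ˢ Set.univ, F q ∂(P.map fun ω => (W ω, E ω)) := by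
        rw [setIntegral_map (ht.prod .univ) hF.aestronglyMeasurable (hW.prodMk hE).aemeasurable,
          Set.mk_preimage_prod, Set.preimage_univ, Set.inter_univ]
    _ = ∫ w in t, ∫ e, F (w, e) ∂(P.map E) ∂(P.map W) := by
        rw [hWE.map_prod_eq_prod_map_map hW.aemeasurable hE.aemeasurable,
          setIntegral_prod _ (hWE.integrable_prod_map_map hW hE hF hint).integrableOn,
          Measure.restrict_univ]
    _ = ∫ w in t, ∫ ω', F (w, E ω') ∂P ∂(P.map W) := by
        simp only [integral_comp_prodMk_left_eq_integral_map hE hF]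

lemma integral_comp_eq_integral_integral (hWE : IndepFun W E P) (hW : Measurable W)
    (hE : Measurable E) (hF : StronglyMeasurable F)
    (hint : Integrable (fun ω => F (W ω, E ω)) P) :
    ∫ ω, F (W ω, E ω) ∂P = ∫ w, ∫ ω', F (w, E ω') ∂P ∂(P.map W) := by
  simpa using hWE.setIntegral_preimage_comp_eq_setIntegral_integral hW hE hF hint .univ

variable [CompleteSpace G]

lemma condExp_comp_ae_eq_integral (hWE : IndepFun W E P) (hW : Measurable W)
    (hE : Measurable E) (hF : StronglyMeasurable F)
    (hint : Integrable (fun ω => F (W ω, E ω)) P) :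
    P[fun ω => F (W ω, E ω) | MeasurableSpace.comap W ‹_›]
      =ᵐ[P] fun ω => ∫ ω', F (W ω, E ω') ∂P := by
  set g : α → G := fun w => ∫ ω', F (w, E ω') ∂P
  have hg : StronglyMeasurable g :=
    (hF.comp_measurable (measurable_fst.prodMk (hE.comp measurable_snd))).integral_prod_right'
  have hgW : Integrable (g ∘ W) P :=
    (integrable_map_measure hg.aestronglyMeasurable hW.aemeasurable).mp
      (hWE.integrable_integral_comp_prodMk_left hW hE hF hint)
  refine (ae_eq_condExp_of_forall_setIntegral_eq hW.comap_le hint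
    (fun s _ _ => hgW.integrableOn) ?_ ?_).symm
  · rintro s ⟨t, ht, rfl⟩ _
    rw [hWE.setIntegral_preimage_comp_eq_setIntegral_integral hW hE hF hint ht,
      setIntegral_map ht hg.aestronglyMeasurable hW.aemeasurable]
    rfl
  · exact (hg.comp_measurable (comap_measurable W)).aestronglyMeasurable

end ProbabilityTheory.IndepFun

end

theorem backdoor_adjustment_parental_set_general
    {Ω : Type*} [MeasurableSpace Ω] (P : Measure Ω) [IsProbabilityMeasure P]
    {k m l : ℕ} (εZ : Ω → (Fin k → ℝ)) (εX : Ω → (Fin m → ℝ)) (εY : Ω → (Fin l → ℝ))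
    (hεZ : Measurable εZ) (hεX : Measurable εX) (hεY : Measurable εY)
    (hindep2 : IndepFun (fun ω => (εZ ω, εX ω)) εY P)
    (h : (Fin k → ℝ) → (Fin m → ℝ) → ℝ) (hh : Measurable (Function.uncurry h))
    (f : ℝ → (Fin k → ℝ) → (Fin l → ℝ) → ℝ)
    (hf : Measurable (fun p : ℝ × (Fin k → ℝ) × (Fin l → ℝ) => f p.1 p.2.1 p.2.2))
    (B : ℝ) (hfB : ∀ u z e, |f u z e| ≤ B)
    (Z : Ω → (Fin k → ℝ)) (X : Ω → ℝ) (Y : Ω → ℝ)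
    (hZ : Z = εZ)
    (hXdef : ∀ ω, X ω = h (Z ω) (εX ω))
    (hYdef : ∀ ω, Y ω = f (X ω) (Z ω) (εY ω))
    (x : ℝ) :
    (Measurable (fun p : ℝ × (Fin k → ℝ) => ∫ ω, f p.1 p.2 (εY ω) ∂P) ∧
      P[Y | MeasurableSpace.comap (fun ω => (X ω, Z ω)) inferInstance]
        =ᵐ[P] fun ω => ∫ ω', f (X ω) (Z ω) (εY ω') ∂P) ∧
    ∫ ω, f x (Z ω) (εY ω) ∂P = ∫ z, (∫ ω', f x z (εY ω') ∂P) ∂(P.map Z) := by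
  subst hZ
  have hX : X = fun ω => h (Z ω) (εX ω) := funext hXdef
  have hY : Y = fun ω => f (X ω) (Z ω) (εY ω) := funext hYdef
  subst hX hY
  have hXZ : Measurable fun ω => (h (Z ω) (εX ω), Z ω) :=
    (hh.comp (hεZ.prodMk hεX)).prodMk hεZ
  have hXZ_indep : IndepFun (fun ω => (h (Z ω) (εX ω), Z ω)) εY P :=
    hindep2.comp (hh.prodMk measurable_fst) measurable_id
  have hZ_indep : IndepFun Z εY P := hindep2.comp measurable_fst measurable_id
  have hF : StronglyMeasurable fun q : (ℝ × (Fin k → ℝ)) × (Fin l → ℝ) => f q.1.1 q.1.2 q.2 :=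
    (hf.comp (measurable_fst.fst.prodMk
      (measurable_fst.snd.prodMk measurable_snd))).stronglyMeasurable
  have hFx : StronglyMeasurable fun q : (Fin k → ℝ) × (Fin l → ℝ) => f x q.1 q.2 :=
    (hf.comp (measurable_const.prodMk measurable_id)).stronglyMeasurable
  have hbdd {g : Ω → ℝ} (hg : Measurable g) (hgB : ∀ ω, |g ω| ≤ B) : Integrable g P :=
    .of_bound hg.aestronglyMeasurable B (.of_forall hgB)
  refine ⟨⟨?_, ?_⟩, ?_⟩
  · have hFεY : StronglyMeasurable fun q : (ℝ × (Fin k → ℝ)) × Ω => f q.1.1 q.1.2 (εY q.2) :=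
      hF.comp_measurable (measurable_fst.prodMk (hεY.comp measurable_snd))
    exact hFεY.integral_prod_right'.measurable
  · exact hXZ_indep.condExp_comp_ae_eq_integral hXZ hεY hF
      (hbdd (hF.measurable.comp (hXZ.prodMk hεY)) fun ω => hfB _ _ _)
  · exact hZ_indep.integral_comp_eq_integral_integral hεZ hεY hFx
      (hbdd (hFx.measurable.comp (hεZ.prodMk hεY)) fun ω => hfB _ _ _)

/-- **Backdoor adjustment with the parental set.**
In the SEM `Z := ε_Z`, `X := h(Z, ε_X)`, `Y := f(X, Z, ε_Y)` with jointly independent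
noises (encoded as `ε_Z ⟂ ε_X` and `(ε_Z, ε_X) ⟂ ε_Y`), `h, f` measurable and `f`
bounded, with regression function `m(u, z) := E[f(u, z, ε_Y)]`:
(i) `m` is measurable and `m(X, Z)` is a version of `E[Y | σ(X, Z)]`; and
(ii) the backdoor adjustment formula with the parental adjustment set `S = {Z}` holds:
`E[Y | do(X = x)] = ∫ m(x, z) dP_Z(z)`. -/
theorem backdoor_adjustment_parental_set
    {Ω : Type*} [MeasurableSpace Ω] (P : Measure Ω) [IsProbabilityMeasure P]
    {k m l : ℕ} (εZ : Ω → (Fin k → ℝ)) (εX : Ω → (Fin m → ℝ)) (εY : Ω → (Fin l → ℝ))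
    (hεZ : Measurable εZ) (hεX : Measurable εX) (hεY : Measurable εY)
    (hindep1 : IndepFun εZ εX P)
    (hindep2 : IndepFun (fun ω => (εZ ω, εX ω)) εY P)
    (h : (Fin k → ℝ) → (Fin m → ℝ) → ℝ) (hh : Measurable (Function.uncurry h))
    (f : ℝ → (Fin k → ℝ) → (Fin l → ℝ) → ℝ)
    (hf : Measurable (fun p : ℝ × (Fin k → ℝ) × (Fin l → ℝ) => f p.1 p.2.1 p.2.2))
    (B : ℝ) (hfB : ∀ u z e, |f u z e| ≤ B)
    (Z : Ω → (Fin k → ℝ)) (X : Ω → ℝ) (Y : Ω → ℝ)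
    (hZ : Z = εZ)
    (hXdef : ∀ ω, X ω = h (Z ω) (εX ω))
    (hYdef : ∀ ω, Y ω = f (X ω) (Z ω) (εY ω))
    (x : ℝ) :
    (Measurable (fun p : ℝ × (Fin k → ℝ) => ∫ ω, f p.1 p.2 (εY ω) ∂P) ∧
      P[Y | MeasurableSpace.comap (fun ω => (X ω, Z ω)) inferInstance]
        =ᵐ[P] fun ω => ∫ ω', f (X ω) (Z ω) (εY ω') ∂P) ∧
    ∫ ω, f x (Z ω) (εY ω) ∂P = ∫ z, (∫ ω', f x z (εY ω') ∂P) ∂(P.map Z) :=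
  backdoor_adjustment_parental_set_general P εZ εX εY hεZ hεX hεY hindep2 h hh f hf B hfB Z X Y hZ
    hXdef hYdef x
end

section
/- Consider the structural equation model Z := ε_Z, V := q(Z, ε_V), X := h(Z, ε_X), Y := f(X, Z, ε_Y), where ε_Z, ε_V, ε_X, ε_Y are independent random elements on a probability space (Ω, F, P) with values in ℝ^k, ℝ^r, ℝ^m, ℝ^l respectively, and q, h, f are measurable with f bounded. Define E[Y | do(X = x)] := E[f(x, Z, ε_Y)] and m̃(u, z, v) := E[f(u, z, ε_Y)]. Then: (i) m̃(X, Z, V) is a version of the conditional expectation E[Y | σ(X, Z, V)]; and (ii) adjusting for the superset S = {Z, V} of the parental set {Z} of X (where V is a non-descendant of X) recovers the same interventional expectation: ∫ m̃(x, z, v) dP_{(Z,V)}(z, v) = E[Y | do(X = x)], where P_{(Z,V)} is the joint law of (Z, V). -/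
open MeasureTheory ProbabilityTheory

/-- Freezing lemma at the integral level: if `W ⟂ ε` and `g` is bounded measurable, then
`E[g(W,ε)] = E[ w ↦ E[g(w,ε)] ∘ W ]`. -/
lemma freeze_integral {α β Ω : Type*} [MeasurableSpace α] [MeasurableSpace β]
    [MeasurableSpace Ω] (P : Measure Ω) [IsProbabilityMeasure P]
    (W : Ω → α) (ε : Ω → β) (hW : Measurable W) (hε : Measurable ε)
    (hindep : IndepFun W ε P) (g : α × β → ℝ) (hg : Measurable g)
    (B : ℝ) (hgB : ∀ p, |g p| ≤ B) :
    ∫ ω, g (W ω, ε ω) ∂P = ∫ ω, (∫ ω', g (W ω, ε ω') ∂P) ∂P := by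
  have hPW : IsProbabilityMeasure (P.map W) := Measure.isProbabilityMeasure_map hW.aemeasurable
  have hPε : IsProbabilityMeasure (P.map ε) := Measure.isProbabilityMeasure_map hε.aemeasurable
  have hmap : P.map (fun ω => (W ω, ε ω)) = (P.map W).prod (P.map ε) :=
    (indepFun_iff_map_prod_eq_prod_map_map hW.aemeasurable hε.aemeasurable).1 hindep
  have hgint : Integrable g ((P.map W).prod (P.map ε)) := by
    refine Integrable.mono' (integrable_const B) hg.aestronglyMeasurable ?_
    exact Filter.Eventually.of_forall fun p => by simpa using hgB p
  have h1 : ∫ ω, g (W ω, ε ω) ∂P = ∫ p, g p ∂((P.map W).prod (P.map ε)) := by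
    rw [← hmap, integral_map (hW.prodMk hε).aemeasurable hg.aestronglyMeasurable]
  have h2 : ∫ p, g p ∂((P.map W).prod (P.map ε)) = ∫ a, ∫ b, g (a, b) ∂(P.map ε) ∂(P.map W) :=
    integral_prod g hgint
  have h3 : ∀ a, ∫ b, g (a, b) ∂(P.map ε) = ∫ ω', g (a, ε ω') ∂P := fun a =>
    integral_map hε.aemeasurable (hg.comp (measurable_const.prodMk measurable_id)).aestronglyMeasurable
  have hG : StronglyMeasurable (fun a => ∫ b, g (a, b) ∂(P.map ε)) :=
    hg.stronglyMeasurable.integral_prod_right'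
  have h4 : ∫ a, ∫ b, g (a, b) ∂(P.map ε) ∂(P.map W)
      = ∫ ω, ∫ b, g (W ω, b) ∂(P.map ε) ∂P :=
    integral_map hW.aemeasurable hG.aestronglyMeasurable
  rw [h1, h2, h4]
  exact integral_congr_ae (Filter.Eventually.of_forall fun ω => h3 (W ω))

/-- **Adjusting for a superset of the parental set.**
In the SEM `Z := ε_Z`, `V := q(Z, ε_V)`, `X := h(Z, ε_X)`, `Y := f(X, Z, ε_Y)` with
jointly independent noises (encoded as `ε_Z ⟂ ε_V`, `(ε_Z, ε_V) ⟂ ε_X` and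
`((ε_Z, ε_V), ε_X) ⟂ ε_Y`), `q, h, f` measurable and `f` bounded, with
`m̃(u, z, v) := E[f(u, z, ε_Y)]`:
(i) `m̃(X, Z, V)` is a version of `E[Y | σ(X, Z, V)]`; and
(ii) adjusting for the superset `S = {Z, V}` of the parental set `{Z}` of `X`
recovers the interventional expectation:
`∫ m̃(x, z, v) dP_{(Z,V)}(z, v) = E[Y | do(X = x)] = E[f(x, Z, ε_Y)]`. -/
theorem backdoor_adjustment_superset
    {Ω : Type*} [MeasurableSpace Ω] (P : Measure Ω) [IsProbabilityMeasure P]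
    {k r m l : ℕ}
    (εZ : Ω → (Fin k → ℝ)) (εV : Ω → (Fin r → ℝ))
    (εX : Ω → (Fin m → ℝ)) (εY : Ω → (Fin l → ℝ))
    (hεZ : Measurable εZ) (hεV : Measurable εV)
    (hεX : Measurable εX) (hεY : Measurable εY)
    (hindep1 : IndepFun εZ εV P)
    (hindep2 : IndepFun (fun ω => (εZ ω, εV ω)) εX P)
    (hindep3 : IndepFun (fun ω => ((εZ ω, εV ω), εX ω)) εY P)
    (q : (Fin k → ℝ) → (Fin r → ℝ) → ℝ) (hq : Measurable (Function.uncurry q))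
    (h : (Fin k → ℝ) → (Fin m → ℝ) → ℝ) (hh : Measurable (Function.uncurry h))
    (f : ℝ → (Fin k → ℝ) → (Fin l → ℝ) → ℝ)
    (hf : Measurable (fun p : ℝ × (Fin k → ℝ) × (Fin l → ℝ) => f p.1 p.2.1 p.2.2))
    (B : ℝ) (hfB : ∀ u z e, |f u z e| ≤ B)
    (Z : Ω → (Fin k → ℝ)) (V : Ω → ℝ) (X : Ω → ℝ) (Y : Ω → ℝ)
    (hZ : Z = εZ)
    (hVdef : ∀ ω, V ω = q (Z ω) (εV ω))
    (hXdef : ∀ ω, X ω = h (Z ω) (εX ω))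
    (hYdef : ∀ ω, Y ω = f (X ω) (Z ω) (εY ω))
    -- the regression function `m̃(u, z, v) = E[f(u, z, ε_Y)]` (not depending on `v`)
    (mtilde : ℝ → (Fin k → ℝ) → ℝ → ℝ)
    (hmtilde : ∀ u z v, mtilde u z v = ∫ ω, f u z (εY ω) ∂P)
    (x : ℝ) :
    (P[Y | MeasurableSpace.comap (fun ω => (X ω, Z ω, V ω)) inferInstance]
        =ᵐ[P] fun ω => mtilde (X ω) (Z ω) (V ω)) ∧
    ∫ zv : (Fin k → ℝ) × ℝ, mtilde x zv.1 zv.2 ∂(P.map (fun ω => (Z ω, V ω)))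
      = ∫ ω, f x (Z ω) (εY ω) ∂P := by
  have hB0 : 0 ≤ B := le_trans (abs_nonneg _) (hfB 0 0 0)
  -- basic measurability
  have hZm : Measurable Z := hZ ▸ hεZ
  have hVm : Measurable V := by
    have : V = fun ω => Function.uncurry q (Z ω, εV ω) := funext fun ω => hVdef ω
    rw [this]; exact hq.comp (hZm.prodMk hεV)
  have hXm : Measurable X := by
    have : X = fun ω => Function.uncurry h (Z ω, εX ω) := funext fun ω => hXdef ω
    rw [this]; exact hh.comp (hZm.prodMk hεX)
  -- the "frozen" kernel g and its conditional mean G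
  set W : Ω → ℝ × (Fin k → ℝ) × ℝ := fun ω => (X ω, Z ω, V ω) with hWdef
  have hWm : Measurable W := hXm.prodMk (hZm.prodMk hVm)
  set g : (ℝ × (Fin k → ℝ) × ℝ) × (Fin l → ℝ) → ℝ := fun p => f p.1.1 p.1.2.1 p.2 with hgdef
  have hgm : Measurable g := by
    exact hf.comp (((measurable_fst.comp measurable_fst).prodMk
      (((measurable_fst.comp measurable_snd).comp measurable_fst).prodMk measurable_snd)))
  have hgB : ∀ p, |g p| ≤ B := fun p => hfB _ _ _
  haveI : IsProbabilityMeasure (P.map εY) := Measure.isProbabilityMeasure_map hεY.aemeasurable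
  set G : ℝ × (Fin k → ℝ) × ℝ → ℝ := fun w => ∫ e, g (w, e) ∂(P.map εY) with hGdef
  have hGalt : ∀ w, G w = ∫ ω', g (w, εY ω') ∂P := fun w =>
    integral_map hεY.aemeasurable
      (hgm.comp (measurable_const.prodMk measurable_id)).aestronglyMeasurable
  have hGsm : StronglyMeasurable G := hgm.stronglyMeasurable.integral_prod_right'
  have key : ∀ u z v, mtilde u z v = G (u, z, v) := by
    intro u z v
    rw [hmtilde, hGalt]
  have hGB : ∀ w, |G w| ≤ B := by
    intro w
    rw [hGdef]
    calc |∫ e, g (w, e) ∂(P.map εY)| = ‖∫ e, g (w, e) ∂(P.map εY)‖ := rfl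
      _ ≤ B * ((P.map εY) Set.univ).toReal :=
          norm_integral_le_of_norm_le_const (Filter.Eventually.of_forall fun e => by
            simpa using hgB (w, e))
      _ = B := by simp
  -- independence: W ⟂ εY
  have hindepW : IndepFun W εY P := by
    have hψ : Measurable (fun p : ((Fin k → ℝ) × (Fin r → ℝ)) × (Fin m → ℝ) =>
        (h p.1.1 p.2, p.1.1, q p.1.1 p.1.2)) := by
      exact (hh.comp ((measurable_fst.comp measurable_fst).prodMk measurable_snd)).prodMk
        ((measurable_fst.comp measurable_fst).prodMk
          (hq.comp ((measurable_fst.comp measurable_fst).prodMk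
            (measurable_snd.comp measurable_fst))))
    have hcomp := hindep3.comp hψ (measurable_id (α := Fin l → ℝ))
    have heq : ((fun p : ((Fin k → ℝ) × (Fin r → ℝ)) × (Fin m → ℝ) =>
        (h p.1.1 p.2, p.1.1, q p.1.1 p.1.2)) ∘ (fun ω => ((εZ ω, εV ω), εX ω))) = W := by
      funext ω
      simp only [Function.comp, hWdef, hXdef, hVdef, hZ]
    have heq2 : (id ∘ εY) = εY := rfl
    rwa [heq, heq2] at hcomp
  -- independence: Z ⟂ εY
  have hindepZ : IndepFun Z εY P := by
    have hcomp := hindep3.comp ((measurable_fst.comp (measurable_fst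
      (α := (Fin k → ℝ) × (Fin r → ℝ)) (β := Fin m → ℝ)))) (measurable_id (α := Fin l → ℝ))
    have heq : ((Prod.fst ∘ Prod.fst : ((Fin k → ℝ) × (Fin r → ℝ)) × (Fin m → ℝ) → (Fin k → ℝ)) ∘
        (fun ω => ((εZ ω, εV ω), εX ω))) = Z := by
      funext ω; simp [Function.comp, hZ]
    have heq2 : (id ∘ εY) = εY := rfl
    rwa [heq, heq2] at hcomp
  constructor
  · -- part (i)
    have hm : MeasurableSpace.comap W inferInstance ≤ _ := hWm.comap_le
    have hYeq : Y = fun ω => g (W ω, εY ω) := funext fun ω => hYdef ω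
    have hYm : Measurable Y := by rw [hYeq]; exact hgm.comp (hWm.prodMk hεY)
    have hYint : Integrable Y P := by
      refine Integrable.mono' (integrable_const B) hYm.aestronglyMeasurable ?_
      exact Filter.Eventually.of_forall fun ω => by rw [hYeq]; simpa using hgB (W ω, εY ω)
    have hcandeq : (fun ω => mtilde (X ω) (Z ω) (V ω)) = fun ω => G (W ω) :=
      funext fun ω => key _ _ _
    have hcandm : Measurable fun ω => mtilde (X ω) (Z ω) (V ω) := by
      rw [hcandeq]; exact hGsm.measurable.comp hWm
    have hcandint : Integrable (fun ω => mtilde (X ω) (Z ω) (V ω)) P := by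
      refine Integrable.mono' (integrable_const B) hcandm.aestronglyMeasurable ?_
      exact Filter.Eventually.of_forall fun ω => by
        rw [key]; simpa using hGB (X ω, Z ω, V ω)
    refine (ae_eq_condExp_of_forall_setIntegral_eq hm hYint
      (fun s _ _ => hcandint.integrableOn) ?_ ?_).symm
    · -- set integral equality
      rintro s ⟨A, hA, rfl⟩ -
      have hsm : MeasurableSet (W ⁻¹' A) := hWm hA
      set gA : (ℝ × (Fin k → ℝ) × ℝ) × (Fin l → ℝ) → ℝ :=
        fun p => Set.indicator A (fun _ => (1 : ℝ)) p.1 * g p with hgAdef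
      have hgAm : Measurable gA :=
        ((measurable_one.indicator hA).comp measurable_fst).mul hgm
      have hgAB : ∀ p, |gA p| ≤ B := by
        intro p
        rw [hgAdef]
        by_cases hp : p.1 ∈ A
        · simp only [Set.indicator_of_mem hp, one_mul]; exact hgB p
        · simp only [Set.indicator_of_notMem hp, zero_mul, abs_zero]; exact hB0
      have hfreeze := freeze_integral P W εY hWm hεY hindepW gA hgAm B hgAB
      have lhs_eq : ∫ ω in W ⁻¹' A, mtilde (X ω) (Z ω) (V ω) ∂P
          = ∫ ω, Set.indicator A (fun _ => (1 : ℝ)) (W ω) * G (W ω) ∂P := by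
        rw [hcandeq, ← integral_indicator hsm]
        congr 1
        funext ω
        by_cases hω : W ω ∈ A
        · simp [Set.indicator_of_mem, hω]
        · simp [Set.indicator_of_notMem, hω]
      have rhs_eq : ∫ ω in W ⁻¹' A, Y ω ∂P = ∫ ω, gA (W ω, εY ω) ∂P := by
        rw [← integral_indicator hsm]
        congr 1
        funext ω
        by_cases hω : W ω ∈ A
        · simp [Set.indicator_of_mem, hω, hgAdef, hYeq]
        · simp [Set.indicator_of_notMem, hω, hgAdef, hYeq]
      have inner_eq : ∀ ω, (∫ ω', gA (W ω, εY ω') ∂P)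
          = Set.indicator A (fun _ => (1 : ℝ)) (W ω) * G (W ω) := by
        intro ω
        rw [hGalt]
        simp only [hgAdef]
        rw [integral_const_mul]
      rw [lhs_eq, rhs_eq, hfreeze]
      exact (integral_congr_ae (Filter.Eventually.of_forall fun ω => (inner_eq ω))).symm
    · -- the candidate is comap-W measurable
      rw [hcandeq]
      have hWm' : Measurable[MeasurableSpace.comap W inferInstance] W :=
        Measurable.of_comap_le le_rfl
      exact StronglyMeasurable.aestronglyMeasurable
        (hGsm.comp_measurable hWm')
  · -- part (ii)
    have hmap : ∫ zv : (Fin k → ℝ) × ℝ, mtilde x zv.1 zv.2 ∂(P.map (fun ω => (Z ω, V ω)))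
        = ∫ ω, mtilde x (Z ω) (V ω) ∂P := by
      have hmeas : AEStronglyMeasurable (fun zv : (Fin k → ℝ) × ℝ => mtilde x zv.1 zv.2)
          (P.map (fun ω => (Z ω, V ω))) := by
        have : (fun zv : (Fin k → ℝ) × ℝ => mtilde x zv.1 zv.2)
            = fun zv => G (x, zv.1, zv.2) := funext fun zv => key _ _ _
        rw [this]
        exact (hGsm.measurable.comp
          (measurable_const.prodMk (measurable_fst.prodMk measurable_snd))).aestronglyMeasurable
      exact integral_map (hZm.prodMk hVm).aemeasurable hmeas
    set g2 : (Fin k → ℝ) × (Fin l → ℝ) → ℝ := fun p => f x p.1 p.2 with hg2def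
    have hg2m : Measurable g2 :=
      hf.comp (measurable_const.prodMk (measurable_fst.prodMk measurable_snd))
    have hg2B : ∀ p, |g2 p| ≤ B := fun p => hfB _ _ _
    have hfreeze := freeze_integral P Z εY hZm hεY hindepZ g2 hg2m B hg2B
    rw [hmap]
    have : ∀ ω, mtilde x (Z ω) (V ω) = ∫ ω', g2 (Z ω, εY ω') ∂P := by
      intro ω; rw [hmtilde]
    calc ∫ ω, mtilde x (Z ω) (V ω) ∂P
        = ∫ ω, (∫ ω', g2 (Z ω, εY ω') ∂P) ∂P :=
          integral_congr_ae (Filter.Eventually.of_forall fun ω => this ω)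
      _ = ∫ ω, g2 (Z ω, εY ω) ∂P := hfreeze.symm
      _ = ∫ ω, f x (Z ω) (εY ω) ∂P := rfl
end

section
/- Let Y_1, …, Y_n ∈ ℝ be responses observed at covariate points ξ_1, …, ξ_n ∈ ℝ^d. Suppose the initial estimator is a weighted mean: m̂_1(ξ) = Σ_{i=1}^n w_i^{(1)}(ξ) Y_i with Σ_{i=1}^n w_i^{(1)}(ξ) = 1 for all ξ ∈ ℝ^d. For each b ≥ 1, define the residuals R_b^{(i)} = Y_i − m̂_b(ξ_i), let ĝ_b(ξ) = Σ_{i=1}^n v_i^{(b)}(ξ) R_b^{(i)} be any weighted-mean fit of the residuals with weight functions satisfying Σ_{i=1}^n v_i^{(b)}(ξ) = 1 for all ξ, and set m̂_{b+1}(ξ) = m̂_b(ξ) + ĝ_b(ξ). Then for every b ≥ 1 there exist weight functions w_1^{(b)}, …, w_n^{(b)} : ℝ^d → ℝ such that m̂_b(ξ) = Σ_{i=1}^n w_i^{(b)}(ξ) Y_i and Σ_{i=1}^n w_i^{(b)}(ξ) = 1 for all ξ ∈ ℝ^d; explicitly, the weights update as w_j^{(b+1)}(ξ) = w_j^{(b)}(ξ)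 + v_j^{(b)}(ξ) − Σ_{i=1}^n v_i^{(b)}(ξ) w_j^{(b)}(ξ_i). That is, L₂-boosting with weighted-mean base learners has the form of a weighted-mean estimator at every iteration. -/
open Finset

/-- **L₂-boosting with weighted-mean base learners is a weighted-mean estimator.**
Suppose the initial estimator is a weighted mean `m̂₁(ξ) = ∑ᵢ wᵢ⁽¹⁾(ξ) Yᵢ` with weights
summing to one, and at each iteration `b ≥ 1` the residuals `R_b⁽ⁱ⁾ = Yᵢ − m̂_b(ξᵢ)` are
fitted by a weighted mean `ĝ_b(ξ) = ∑ᵢ vᵢ⁽ᵇ⁾(ξ) R_b⁽ⁱ⁾` with weights summing to one, and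
`m̂_{b+1} = m̂_b + ĝ_b`.  Then there are weight functions `W b i` with `W 1 = w¹` such
that for every `b ≥ 1` the iterate is the weighted mean `m̂_b(ξ) = ∑ᵢ W b i (ξ) Yᵢ` with
`∑ᵢ W b i (ξ) = 1`, and the weights update as
`W (b+1) j (ξ) = W b j (ξ) + v b j (ξ) − ∑ᵢ v b i (ξ) * W b j (ξᵢ)`. -/
theorem boosting_weighted_mean
    {n d : ℕ} (Y : Fin n → ℝ) (ξ : Fin n → (Fin d → ℝ))
    (w1 : Fin n → (Fin d → ℝ) → ℝ)
    (hw1 : ∀ ξ' : Fin d → ℝ, ∑ i, w1 i ξ' = 1)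
    (v : ℕ → Fin n → (Fin d → ℝ) → ℝ)
    (hv : ∀ b : ℕ, 1 ≤ b → ∀ ξ' : Fin d → ℝ, ∑ i, v b i ξ' = 1)
    (mhat : ℕ → (Fin d → ℝ) → ℝ)
    (hinit : ∀ ξ' : Fin d → ℝ, mhat 1 ξ' = ∑ i, w1 i ξ' * Y i)
    (hstep : ∀ b : ℕ, 1 ≤ b → ∀ ξ' : Fin d → ℝ,
      mhat (b + 1) ξ' = mhat b ξ' + ∑ i, v b i ξ' * (Y i - mhat b (ξ i))) :
    ∃ W : ℕ → Fin n → (Fin d → ℝ) → ℝ,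
      W 1 = w1 ∧
      (∀ b : ℕ, 1 ≤ b → ∀ ξ' : Fin d → ℝ,
        mhat b ξ' = ∑ i, W b i ξ' * Y i ∧ ∑ i, W b i ξ' = 1) ∧
      (∀ b : ℕ, 1 ≤ b → ∀ j : Fin n, ∀ ξ' : Fin d → ℝ,
        W (b + 1) j ξ' = W b j ξ' + v b j ξ' - ∑ i, v b i ξ' * W b j (ξ i)) := by
  classical
  let W : ℕ → Fin n → (Fin d → ℝ) → ℝ := fun b =>
    Nat.rec w1 (fun b Wb => if b = 0 then w1 else
      fun j ξ' => Wb j ξ' + v b j ξ' - ∑ i, v b i ξ' * Wb j (ξ i)) b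
  have hW1 : W 1 = w1 := by simp [W]
  have hWrec : ∀ b : ℕ, 1 ≤ b → ∀ j ξ',
      W (b + 1) j ξ' = W b j ξ' + v b j ξ' - ∑ i, v b i ξ' * W b j (ξ i) := by
    intro b hb j ξ'
    have hb' : b ≠ 0 := Nat.one_le_iff_ne_zero.mp hb
    simp only [W]
    simp [hb']
  refine ⟨W, hW1, ?_, hWrec⟩
  intro b hb
  induction b with
  | zero => omega
  | succ b ih =>
    rcases Nat.eq_or_lt_of_le hb with h1 | h1
    · intro ξ'
      have hb0 : b = 0 := by omega
      subst hb0
      show mhat 1 ξ' = ∑ i, W 1 i ξ' * Y i ∧ ∑ i, W 1 i ξ' = 1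
      rw [hW1]
      exact ⟨hinit ξ', hw1 ξ'⟩
    · have hb1 : 1 ≤ b := by omega
      have IH := ih hb1
      intro ξ'
      have hm : mhat b ξ' = ∑ i, W b i ξ' * Y i := (IH ξ').1
      have hs : ∑ i, W b i ξ' = 1 := (IH ξ').2
      have hmx : ∀ i, mhat b (ξ i) = ∑ j, W b j (ξ i) * Y j := fun i => (IH (ξ i)).1
      constructor
      · rw [hstep b hb1 ξ', hm]
        have expand : ∑ j, W (b+1) j ξ' * Y j =
            ∑ j, W b j ξ' * Y j + ∑ j, v b j ξ' * Y j
              - ∑ j, ∑ i, v b i ξ' * W b j (ξ i) * Y j := by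
          rw [Finset.sum_congr rfl fun j (_ : j ∈ Finset.univ) => by
            rw [hWrec b hb1 j ξ', sub_mul, add_mul, Finset.sum_mul]]
          rw [Finset.sum_sub_distrib, Finset.sum_add_distrib]
        have lhsexp : ∑ i, v b i ξ' * (Y i - mhat b (ξ i)) =
            ∑ i, v b i ξ' * Y i - ∑ i, ∑ j, v b i ξ' * W b j (ξ i) * Y j := by
          rw [← Finset.sum_sub_distrib]
          refine Finset.sum_congr rfl fun i _ => ?_
          rw [hmx i, mul_sub, Finset.mul_sum]
          congr 1
          exact Finset.sum_congr rfl fun j _ => (mul_assoc _ _ _).symm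
        rw [expand, lhsexp, Finset.sum_comm]
        ring
      · rw [Finset.sum_congr rfl fun j _ => hWrec b hb1 j ξ']
        rw [Finset.sum_sub_distrib, Finset.sum_add_distrib, hs, hv b hb1 ξ']
        rw [Finset.sum_comm]
        have hsum : ∀ i : Fin n, ∑ j, v b i ξ' * W b j (ξ i) = v b i ξ' := by
          intro i
          rw [← Finset.mul_sum, (IH (ξ i)).2, mul_one]
        rw [Finset.sum_congr rfl fun i _ => hsum i, hv b hb1 ξ']
        ring
end
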